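/- arXiv:math/0501106 — 4 statements merged into one kernel-verified Lean document; each statement's English description precedes it below -/
import Mathlib

section
/- Let W be a topological space, N a topological space, f : Z → W continuous, p : W → N × [0,∞) continuous, q : N × [0,∞) → N × [0,∞) given by q(x,s) = (x, max(s−10, 0)), and F : Z × I → N × [0,∞) a homotopy with F(z,0) = q(p(f(z))) for all z, and with the property that π₂F(z,t) > 0 iff π₂F(z,0) > 0 (two-stratum stratum preservation). Let q̂ : N × [10,∞) → N × [0,∞) be the restriction of q. Then q̂ is a homeomorphism, and the formula F'(z,t) = (π₁F(z,t), π₂p f(z)) if π₂p f(z) ≤ 10, F'(z,t) = q̂⁻¹F(z,t) if π₂p f(z) ≥ 10, defines a continuous map F' : Z × I → N × [0,∞) with q ∘ F' = F and F'(z,0) = p(f(z)) for all z. -/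
/-- The lifting problem conversion in Lemma 5.1: with
`q(x,s) = (x, max(s−10,0))`, its restriction `q̂` to `N × [10,∞)` is a
homeomorphism onto `N × [0,∞)`, and the piecewise formula for `F'` defines a
continuous map with `q ∘ F' = F` and `F'(z,0) = p(f(z))`. -/
theorem lifting_problem_conversion {N W Z : Type*} [TopologicalSpace N]
    [TopologicalSpace W] [TopologicalSpace Z]
    (p : W → N × ℝ) (hp : Continuous p) (hpnn : ∀ w, 0 ≤ (p w).2)
    (f : Z → W) (hf : Continuous f)
    (F : Z × unitInterval → N × ℝ) (hF : Continuous F) (hFnn : ∀ q, 0 ≤ (F q).2)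
    (hF0 : ∀ z, F (z, 0) = ((p (f z)).1, max ((p (f z)).2 - 10) 0))
    (hstrat : ∀ z t, (0 < (F (z, t)).2 ↔ 0 < (F (z, 0)).2)) :
    (∃ e : N × {s : ℝ // 10 ≤ s} ≃ₜ N × {s : ℝ // 0 ≤ s},
      ∀ x, (e x).1 = x.1 ∧ ((e x).2 : ℝ) = (x.2 : ℝ) - 10) ∧
    (let F' : Z × unitInterval → N × ℝ := fun q =>
      if (p (f q.1)).2 ≤ 10 then ((F q).1, (p (f q.1)).2)
      else ((F q).1, (F q).2 + 10)
     Continuous F' ∧ (∀ q, ((F' q).1, max ((F' q).2 - 10) 0) = F q) ∧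
       ∀ z, F' (z, 0) = p (f z)) := by
  constructor
  · -- the homeomorphism
    refine ⟨(Homeomorph.refl N).prodCongr
      { toFun := fun s => ⟨(s : ℝ) - 10, by linarith [s.2]⟩
        invFun := fun s => ⟨(s : ℝ) + 10, by linarith [s.2]⟩
        left_inv := fun s => by ext; simp
        right_inv := fun s => by ext; simp
        continuous_toFun := (continuous_subtype_val.sub continuous_const).subtype_mk
          fun s => by show (0:ℝ) ≤ (s:ℝ) - 10; linarith [s.2]
        continuous_invFun := (continuous_subtype_val.add continuous_const).subtype_mk
          fun s => by show (10:ℝ) ≤ (s:ℝ) + 10; linarith [s.2] },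
      fun x => ⟨rfl, rfl⟩⟩
  · intro F'
    -- key fact: if (p (f z)).2 ≤ 10 then (F (z,t)).2 = 0
    have key : ∀ (z : Z) (t : unitInterval), (p (f z)).2 ≤ 10 → (F (z, t)).2 = 0 := by
      intro z t h
      have h0 : (F (z, 0)).2 = 0 := by
        rw [hF0 z]; simp; linarith
      by_contra hne
      have hpos : 0 < (F (z, t)).2 := lt_of_le_of_ne (hFnn _) (Ne.symm hne)
      rw [hstrat z t, h0] at hpos
      exact lt_irrefl 0 hpos
    refine ⟨?_, ?_, ?_⟩
    · -- continuity
      apply Continuous.if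
      · intro a ha
        have hc : Continuous fun a : Z × unitInterval => (p (f a.1)).2 :=
          (hp.comp (hf.comp continuous_fst)).snd
        have hfr : (p (f a.1)).2 = 10 :=
          frontier_le_subset_eq hc continuous_const ha
        have hF2 : (F a).2 = 0 := by
          obtain ⟨z, t⟩ := a
          exact key z t (le_of_eq hfr)
        rw [hfr, hF2]
        norm_num
      · exact (hF.fst.prodMk ((hp.comp (hf.comp continuous_fst)).snd))
      · exact (hF.fst.prodMk (hF.snd.add continuous_const))
    · -- q ∘ F' = F
      intro q
      obtain ⟨z, t⟩ := q
      by_cases h : (p (f z)).2 ≤ 10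
      · simp only [F', if_pos h]
        have hF2 : (F (z, t)).2 = 0 := key z t h
        refine Prod.ext rfl ?_
        simp only [hF2]
        exact max_eq_right (by linarith)
      · simp only [F', if_neg h]
        ext
        · rfl
        · simp [hFnn (z, t)]
    · -- F'(z,0) = p (f z)
      intro z
      by_cases h : (p (f z)).2 ≤ 10
      · simp only [F', if_pos h]
        ext
        · rw [hF0 z]
        · rfl
      · push_neg at h
        simp only [F', if_neg (not_le.mpr h)]
        ext
        · rw [hF0 z]
        · rw [hF0 z]
          simp only
          rw [max_eq_left (by linarith)]
          ring
end

section
/- Let X be a locally compact Hausdorff topological space, Y ⊆ X closed, and suppose β̃ : X → X is a proper continuous surjection such that β̃⁻¹(Y) = Y and β̃ restricts to a homeomorphism X \ N → X \ A for some closed sets A ⊆ N ⊆ Y with β̃⁻¹(A) = N and β̃|A = id. Suppose φ : X → Y × [0,∞) is a proper continuous map with φ⁻¹(Y × {0}) = Y and φ(x) = (β̃(x), 0) for each x ∈ Y. Then the map h : X → (X \ Y) ∪_{φ|} Y defined by h(x) = x for x ∈ Y and h(x) = β̃⁻¹(x) for x ∈ X \ Y is a homeomorphism restricting to the identity on Y,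 where (X \ Y) ∪_{φ|} Y is the teardrop of φ|(X \ Y) : X \ Y → Y × (0,∞). -/
/-- Teardrop recognition (Lemma 6.11): given a proper surjection `β̃ : X → X`
collapsing a closed neighborhood `N` of `A` in `Y` to `A`, fixing `A`, a
homeomorphism off `N`, and a proper map `φ : X → Y × [0,∞)` with
`φ⁻¹(Y × {0}) = Y` and `φ = (β̃, 0)` on `Y`, the map equal to the identity on
`Y` and to `β̃⁻¹` off `Y` is a homeomorphism from `X` to the teardrop
`(X \ Y) ∪_{φ|} Y`. -/
theorem teardrop_recognition {X : Type*} [TopologicalSpace X] [LocallyCompactSpace X]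
    [T2Space X]
    (Y A N : Set X) (hYc : IsClosed Y) (hAc : IsClosed A) (hNc : IsClosed N)
    (hAN : A ⊆ N) (hNY : N ⊆ Y)
    (β : X → X) (hβ : IsProperMap β) (hβsurj : Function.Surjective β)
    (hβY : β ⁻¹' Y = Y) (hβA : β ⁻¹' A = N) (hβid : ∀ a ∈ A, β a = a)
    (hrestr : ∃ e : ↥Nᶜ ≃ₜ ↥Aᶜ, ∀ x : ↥Nᶜ, (e x : X) = β x)
    (φ : X → ↥Y × ℝ) (hφprop : IsProperMap φ) (hφnn : ∀ x, 0 ≤ (φ x).2)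
    (hφfib : ∀ x, ((φ x).2 = 0 ↔ x ∈ Y))
    (hφid : ∀ x, x ∈ Y → ((φ x).1 : X) = β x ∧ (φ x).2 = 0) :
    let c : ({x : X // x ∉ Y} ⊕ ↥Y) → ↥Y × ℝ :=
      Sum.elim (fun x => φ x) (fun y => (y, 0))
    let tT : TopologicalSpace ({x : X // x ∉ Y} ⊕ ↥Y) := TopologicalSpace.generateFrom
      ({S | ∃ U : Set {x : X // x ∉ Y}, IsOpen U ∧ S = Sum.inl '' U} ∪
       {S | ∃ V : Set (↥Y × ℝ), IsOpen V ∧ S = c ⁻¹' V})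
    ∃ h : @Homeomorph X ({x : X // x ∉ Y} ⊕ ↥Y) _ tT,
      (∀ x (hx : x ∈ Y), h x = Sum.inr ⟨x, hx⟩) ∧
      (∀ (x : X) (w : {x : X // x ∉ Y}), h x = Sum.inl w → β (w : X) = x) := by
  classical
  intro c tT
  obtain ⟨e, he⟩ := hrestr
  have hmemY : ∀ x : X, β x ∈ Y ↔ x ∈ Y := fun x => by
    constructor
    · intro hx; rw [← hβY]; exact hx
    · intro hx; rw [← hβY] at hx; exact hx
  have hAA : ∀ x : X, x ∉ Y → x ∉ A := fun x hx ha => hx (hNY (hAN ha))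
  have hNN : ∀ x : X, x ∉ Y → x ∉ N := fun x hx hn => hx (hNY hn)
  have hβr : ∀ w : {x : X // x ∉ Y}, β (w : X) ∉ Y := fun w h => w.2 ((hmemY w).mp h)
  let βr : {x : X // x ∉ Y} → {x : X // x ∉ Y} := fun w => ⟨β w, hβr w⟩
  have keyσ : ∀ z : ↥Aᶜ, β ((e.symm z : ↥Nᶜ) : X) = (z : X) := fun z => by
    rw [← he (e.symm z), e.apply_symm_apply]
  let σ : {x : X // x ∉ Y} → {x : X // x ∉ Y} := fun x =>
    ⟨((e.symm ⟨(x : X), hAA x x.2⟩ : ↥Nᶜ) : X), fun hy =>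
      x.2 (keyσ ⟨(x : X), hAA x x.2⟩ ▸ (hmemY _).mpr hy)⟩
  have hσβ : ∀ w : {x : X // x ∉ Y}, σ (βr w) = w := by
    intro w
    have hwN : (w : X) ∈ Nᶜ := hNN w w.2
    have h1 : (⟨β w, hAA _ (hβr w)⟩ : ↥Aᶜ) = e ⟨(w : X), hwN⟩ :=
      Subtype.ext (he ⟨(w : X), hwN⟩).symm
    apply Subtype.ext
    show ((e.symm ⟨β w, hAA _ (hβr w)⟩ : ↥Nᶜ) : X) = (w : X)
    rw [h1, e.symm_apply_apply]
  have hβσ : ∀ w : {x : X // x ∉ Y}, βr (σ w) = w := fun w =>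
    Subtype.ext (keyσ ⟨(w : X), hAA w w.2⟩)
  have hσcont : Continuous σ := by
    apply Continuous.subtype_mk
    exact continuous_subtype_val.comp (e.symm.continuous.comp
      (Continuous.subtype_mk continuous_subtype_val _))
  -- the map h and its inverse
  let h : X → {x : X // x ∉ Y} ⊕ ↥Y := fun x =>
    if hx : x ∈ Y then Sum.inr ⟨x, hx⟩ else Sum.inl (σ ⟨x, hx⟩)
  let h' : {x : X // x ∉ Y} ⊕ ↥Y → X := Sum.elim (fun w => β w) (fun y => (y : X))
  have hhY : ∀ (x : X) (hx : x ∈ Y), h x = Sum.inr ⟨x, hx⟩ := fun x hx => dif_pos hx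
  have hhN : ∀ (x : X) (hx : x ∉ Y), h x = Sum.inl (σ ⟨x, hx⟩) := fun x hx => dif_neg hx
  have hβσ' : ∀ (x : X) (hx : x ∉ Y), β ((σ ⟨x, hx⟩ : {x : X // x ∉ Y}) : X) = x :=
    fun x hx => congrArg Subtype.val (hβσ ⟨x, hx⟩)
  have hσfix : ∀ (w : {x : X // x ∉ Y}), σ ⟨β w, hβr w⟩ = w := fun w => hσβ w
  have hli : Function.LeftInverse h' h := by
    intro x
    by_cases hx : x ∈ Y
    · rw [hhY x hx]; rfl
    · rw [hhN x hx]; exact hβσ' x hx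
  have hri : Function.RightInverse h' h := by
    rintro (w | y)
    · show h (β w) = Sum.inl w
      rw [hhN _ (hβr w)]
      rw [hσfix w]
    · show h (y : X) = Sum.inr y
      rw [hhY _ y.2]
  let hEquiv : X ≃ ({x : X // x ∉ Y} ⊕ ↥Y) := ⟨h, h', hli, hri⟩
  -- the composite map g = c ∘ h
  let g : X → ↥Y × ℝ := fun x => c (h x)
  have hgY : ∀ (x : X) (hx : x ∈ Y), g x = (⟨x, hx⟩, 0) := by
    intro x hx; show c (h x) = _; rw [hhY x hx]; rfl
  have hgN : ∀ (x : X) (hx : x ∉ Y), g x = φ ((σ ⟨x, hx⟩ : {x : X // x ∉ Y}) : X) := by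
    intro x hx; show c (h x) = _; rw [hhN x hx]; rfl
  have hgβ : ∀ x : X, g (β x) = φ x := by
    intro x
    by_cases hx : x ∈ Y
    · rw [hgY (β x) ((hmemY x).mpr hx)]
      obtain ⟨h1, h2⟩ := hφid x hx
      exact Prod.ext (Subtype.ext h1.symm) h2.symm
    · rw [hgN (β x) (hβr ⟨x, hx⟩), hσfix ⟨x, hx⟩]
  have hgβ' : g ∘ β = φ := funext hgβ
  have hquot : Topology.IsQuotientMap β :=
    hβ.isClosedMap.isQuotientMap hβ.continuous hβsurj
  have hgcont : Continuous g := by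
    rw [hquot.continuous_iff, hgβ']
    exact hφprop.continuous
  have hgclosed : IsClosedMap g := by
    intro C hC
    have himg : g '' C = φ '' (β ⁻¹' C) := by
      conv_lhs => rw [← hβsurj.image_preimage C]
      rw [← Set.image_comp, hgβ']
    rw [himg]
    exact hφprop.isClosedMap _ (hC.preimage hβ.continuous)
  have hg0 : ∀ x : X, (g x).2 = 0 → x ∈ Y := by
    intro x h0
    by_contra hx
    rw [hgN x hx] at h0
    exact (σ ⟨x, hx⟩).2 ((hφfib _).mp h0)
  -- continuity of h
  have hYo : IsOpen {x : X | x ∉ Y} := hYc.isOpen_compl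
  have hvalOpen : IsOpenMap (Subtype.val : {x : X // x ∉ Y} → X) :=
    hYo.isOpenMap_subtype_val
  have hcont : @Continuous X _ _ tT h := by
    apply continuous_generateFrom_iff.mpr
    rintro S (⟨U, hU, rfl⟩ | ⟨V, hV, rfl⟩)
    · have hpre : h ⁻¹' (Sum.inl '' U) = Subtype.val '' (σ ⁻¹' U) := by
        ext x
        simp only [Set.mem_preimage, Set.mem_image]
        constructor
        · rintro ⟨u, hu, hux⟩
          by_cases hx : x ∈ Y
          · rw [hhY x hx] at hux; exact absurd hux (by simp)
          · rw [hhN x hx] at hux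
            have huσ : u = σ ⟨x, hx⟩ := Sum.inl.inj hux
            exact ⟨⟨x, hx⟩, huσ ▸ hu, rfl⟩
        · rintro ⟨w, hw, rfl⟩
          exact ⟨σ w, hw, (hhN w w.2).symm ▸ rfl⟩
      rw [hpre]
      exact hvalOpen _ (hU.preimage hσcont)
    · exact hV.preimage hgcont
  -- openness of h
  have hopen : @IsOpenMap X ({x : X // x ∉ Y} ⊕ ↥Y) _ tT h := by
    intro U hU
    have hV : IsOpen ((g '' Uᶜ)ᶜ) := (hgclosed _ hU.isClosed_compl).isOpen_compl
    have hW1 : IsOpen {w : {x : X // x ∉ Y} | β (w : X) ∈ U} :=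
      hU.preimage (hβ.continuous.comp continuous_subtype_val)
    have himg : h '' U =
        Sum.inl '' {w : {x : X // x ∉ Y} | β (w : X) ∈ U} ∪ c ⁻¹' ((g '' Uᶜ)ᶜ) := by
      ext t
      cases t with
      | inl w =>
        simp only [Set.mem_image, Set.mem_union, Set.mem_preimage, Set.mem_setOf_eq,
          Set.mem_compl_iff]
        constructor
        · rintro ⟨x, hxU, hhx⟩
          left
          by_cases hx : x ∈ Y
          · rw [hhY x hx] at hhx; exact absurd hhx (by simp)
          · rw [hhN x hx] at hhx
            have hw : σ ⟨x, hx⟩ = w := Sum.inl.inj hhx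
            exact ⟨w, by rw [← hw, hβσ' x hx]; exact hxU, rfl⟩
        · rintro (⟨w', hw', hww⟩ | hcV)
          · obtain rfl : w' = w := Sum.inl.inj hww
            exact ⟨β w', hw', by rw [hhN _ (hβr w'), hσfix w']⟩
          · have hc : c (Sum.inl w) = φ (w : X) := rfl
            rw [hc, ← hgβ (w : X)] at hcV
            refine ⟨β w, ?_, by rw [hhN _ (hβr w), hσfix w]⟩
            by_contra hβwU
            exact hcV ⟨β w, hβwU, rfl⟩
      | inr y =>
        simp only [Set.mem_image, Set.mem_union, Set.mem_preimage, Set.mem_compl_iff]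
        constructor
        · rintro ⟨x, hxU, hhx⟩
          right
          by_cases hx : x ∈ Y
          · rw [hhY x hx] at hhx
            have hy : (⟨x, hx⟩ : ↥Y) = y := Sum.inr.inj hhx
            rintro ⟨x', hx'U, hgx'⟩
            have hx'Y : x' ∈ Y := hg0 x' (by rw [hgx']; rfl)
            rw [hgY x' hx'Y] at hgx'
            have hxx : x' = (y : X) := congrArg Subtype.val (congrArg Prod.fst hgx')
            rw [← hy] at hxx
            exact hx'U (hxx ▸ hxU)
          · rw [hhN x hx] at hhx; exact absurd hhx (by simp)
        · rintro (⟨w', _, hww⟩ | hcV)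
          · exact absurd hww (by simp)
          · refine ⟨(y : X), ?_, hhY _ y.2⟩
            by_contra hyU
            exact hcV ⟨(y : X), hyU, by rw [hgY _ y.2]; rfl⟩
    rw [himg]
    have h1 : @IsOpen _ tT (Sum.inl '' {w : {x : X // x ∉ Y} | β (w : X) ∈ U}) :=
      TopologicalSpace.isOpen_generateFrom_of_mem (Or.inl ⟨_, hW1, rfl⟩)
    have h2 : @IsOpen _ tT (c ⁻¹' ((g '' Uᶜ)ᶜ)) :=
      TopologicalSpace.isOpen_generateFrom_of_mem (Or.inr ⟨_, hV, rfl⟩)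
    exact h1.union h2
  refine ⟨@Equiv.toHomeomorphOfContinuousOpen X ({x : X // x ∉ Y} ⊕ ↥Y) _ tT
      hEquiv hcont hopen,
    fun x hx => hhY x hx, fun x w hw => ?_⟩
  replace hw : h x = Sum.inl w := hw
  by_cases hx : x ∈ Y
  · rw [hhY x hx] at hw; exact absurd hw (by simp)
  · rw [hhN x hx] at hw
    have hws : σ ⟨x, hx⟩ = w := Sum.inl.inj hw
    rw [← hws]
    exact hβσ' x hx
end

section
/- In the setting of the previous teardrop-recognition lemma, continuity of h⁻¹ holds: if x_n ∈ X \ Y is a sequence converging to x₀ ∈ Y in the teardrop topology of (X \ Y) ∪_{φ|} Y, then β̃(x_n) → x₀ in X. -/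
/-! Along any ultrafilter refining the sequence, properness of `φ` produces a limit point `x'`
with `φ x' = (x₀, 0)`; the fibre conditions force `x' ∈ Y` and `β x' = x₀`, so continuity of `β`
sends the ultrafilter to `x₀`. -/

open Filter Topology

theorem IsProperMap.tendsto_of_eq_on_fiber {X Z W : Type*} [TopologicalSpace X]
    [TopologicalSpace Z] [TopologicalSpace W] {φ : X → Z} (hφ : IsProperMap φ) {f : X → W}
    (hf : Continuous f) {l : Filter X} {z : Z} {w : W} (hl : Tendsto φ l (𝓝 z))
    (hfib : ∀ x, φ x = z → f x = w) : Tendsto f l (𝓝 w) := by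
  refine (tendsto_iff_ultrafilter f l (𝓝 w)).2 fun 𝒰 h𝒰 => ?_
  obtain ⟨x, hxz, h𝒰x⟩ := hφ.ultrafilter_le_nhds_of_tendsto (hl.mono_left h𝒰)
  exact hfib x hxz ▸ (hf.tendsto x).mono_left h𝒰x

theorem teardrop_recognition_inverse_continuous_general {X : Type*} [TopologicalSpace X]
    (Y : Set X)
    (β : X → X) (hβ : IsProperMap β)
    (φ : X → ↥Y × ℝ) (hφprop : IsProperMap φ)
    (hφfib : ∀ x, ((φ x).2 = 0 ↔ x ∈ Y))
    (hφid : ∀ x, x ∈ Y → ((φ x).1 : X) = β x ∧ (φ x).2 = 0)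
    (x : ℕ → X) (x₀ : X) (hx₀ : x₀ ∈ Y)
    (hconv : Filter.Tendsto (fun n => φ (x n)) Filter.atTop
      (nhds ((⟨x₀, hx₀⟩ : ↥Y), (0 : ℝ)))) :
    Filter.Tendsto (fun n => β (x n)) Filter.atTop (nhds x₀) := by
  refine hφprop.tendsto_of_eq_on_fiber (l := map x atTop) hβ.continuous hconv fun x' hx' => ?_
  have hx'Y : x' ∈ Y := (hφfib x').1 (by rw [hx'])
  simpa [hx'] using ((hφid x' hx'Y).1).symm

/-- Continuity of `h⁻¹` in the teardrop-recognition lemma: if `x_n ∈ X \ Y`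
converges to `x₀ ∈ Y` in the teardrop topology (i.e. `φ(x_n) → (x₀,0)` in
`Y × [0,∞)`), then `β̃(x_n) → x₀` in `X`. -/
theorem teardrop_recognition_inverse_continuous {X : Type*} [TopologicalSpace X]
    [LocallyCompactSpace X] [T2Space X] [SecondCountableTopology X]
    (Y A : Set X) (hYc : IsClosed Y) (hAc : IsClosed A) (hAY : A ⊆ Y)
    (β : X → X) (hβ : IsProperMap β) (hβsurj : Function.Surjective β)
    (hβY : β ⁻¹' Y = Y) (hβid : ∀ a ∈ A, β a = a)
    (φ : X → ↥Y × ℝ) (hφprop : IsProperMap φ) (hφnn : ∀ x, 0 ≤ (φ x).2)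
    (hφfib : ∀ x, ((φ x).2 = 0 ↔ x ∈ Y))
    (hφid : ∀ x, x ∈ Y → ((φ x).1 : X) = β x ∧ (φ x).2 = 0)
    (x : ℕ → X) (hx : ∀ n, x n ∉ Y) (x₀ : X) (hx₀ : x₀ ∈ Y)
    (hconv : Filter.Tendsto (fun n => φ (x n)) Filter.atTop
      (nhds ((⟨x₀, hx₀⟩ : ↥Y), (0 : ℝ)))) :
    Filter.Tendsto (fun n => β (x n)) Filter.atTop (nhds x₀) :=
  teardrop_recognition_inverse_continuous_general Y β hβ φ hφprop hφfib hφid x x₀ hx₀ hconv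
end

section
/- Define r : A × [0,∞) × [0,∞) → A × [0,∞) by r(a,s,t) = (a, s+t), where A is any topological space and A × [0,∞) carries the two-stratum stratification A × {0}, A × (0,∞), while A × [0,∞) × [0,∞) carries the stratification by products of {0}/(0,∞) in each half-line factor. Then r is a stratified fibration: every stratified homotopy lifting problem for r admits a stratified solution. -/
open scoped NNReal
open Filter Topology

lemma aux_le (u s d : ℝ≥0) (hsd : s ≤ d) : u * s / d ≤ u := by
  rcases eq_or_ne d 0 with h | h
  · simp [h]
  · rw [div_le_iff₀ (pos_iff_ne_zero.2 h)]
    exact mul_le_mul_right hsd u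

lemma aux_cont {X : Type*} [TopologicalSpace X] (u s d : X → ℝ≥0)
    (hu : Continuous u) (hs : Continuous s) (hd : Continuous d)
    (hsd : ∀ x, s x ≤ d x) (h0 : ∀ x, d x = 0 → u x = 0) :
    Continuous fun x => u x * s x / d x := by
  rw [continuous_iff_continuousAt]
  intro x
  by_cases hx : d x = 0
  · have hux : u x = 0 := h0 x hx
    have hu0 : Tendsto u (𝓝 x) (𝓝 0) := by
      have := hu.continuousAt (x := x)
      simpa [ContinuousAt, hux] using this
    have : Tendsto (fun y => u y * s y / d y) (𝓝 x) (𝓝 0) :=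
      tendsto_of_tendsto_of_tendsto_of_le_of_le tendsto_const_nhds
        hu0 (fun y => zero_le) (fun y => aux_le _ _ _ (hsd y))
    simpa [ContinuousAt, hx, hux] using this
  · exact (hu.continuousAt.mul hs.continuousAt).div hd.continuousAt hx

lemma aux_cancel (s t : ℝ≥0) : (s + t) * s / (s + t) = s := by
  rcases eq_or_ne (s + t) 0 with h | h
  · rcases add_eq_zero.1 h with ⟨hs, ht⟩
    simp [hs, ht]
  · rw [mul_comm, mul_div_assoc, div_self h, mul_one]

/-- The map `r : A × [0,∞) × [0,∞) → A × [0,∞)`, `r(a,s,t) = (a, s+t)`, is a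
stratified fibration for the two-stratum stratification of `[0,∞)` factors:
every stratified homotopy lifting problem admits a stratified solution. -/
theorem r_stratified_fibration {A Z : Type*} [TopologicalSpace A] [TopologicalSpace Z]
    (f : Z → A × ℝ≥0 × ℝ≥0) (hf : Continuous f)
    (F : Z × unitInterval → A × ℝ≥0) (hF : Continuous F)
    (hF0 : ∀ z, F (z, 0) = ((f z).1, (f z).2.1 + (f z).2.2))
    (hstrat : ∀ z t, ((F (z, t)).2 = 0 ↔ (F (z, 0)).2 = 0)) :
    ∃ Ft : Z × unitInterval → A × ℝ≥0 × ℝ≥0, Continuous Ft ∧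
      (∀ z, Ft (z, 0) = f z) ∧
      (∀ q, ((Ft q).1, (Ft q).2.1 + (Ft q).2.2) = F q) ∧
      (∀ z t, ((Ft (z, t)).2.1 = 0 ↔ (Ft (z, 0)).2.1 = 0) ∧
        ((Ft (z, t)).2.2 = 0 ↔ (Ft (z, 0)).2.2 = 0)) := by
  -- notation
  set s : Z → ℝ≥0 := fun z => (f z).2.1 with hs_def
  set t : Z → ℝ≥0 := fun z => (f z).2.2 with ht_def
  set d : Z → ℝ≥0 := fun z => s z + t z with hd_def
  have hF02 : ∀ z, (F (z, 0)).2 = d z := fun z => by rw [hF0 z]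
  -- key: u = 0 when d = 0
  have key : ∀ (z : Z) (τ : unitInterval), d z = 0 → (F (z, τ)).2 = 0 := by
    intro z τ h
    rw [hstrat z τ, hF02 z]; exact h
  refine ⟨fun p => ((F p).1, (F p).2 * s p.1 / d p.1, (F p).2 * t p.1 / d p.1),
    ?_, ?_, ?_, ?_⟩
  · have hu : Continuous fun p : Z × unitInterval => (F p).2 := hF.snd
    have hsc : Continuous s := hf.snd.fst
    have htc : Continuous t := hf.snd.snd
    have hdc : Continuous d := hsc.add htc
    refine hF.fst.prodMk (Continuous.prodMk ?_ ?_)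
    · exact aux_cont _ _ _ hu (hsc.comp continuous_fst) (hdc.comp continuous_fst)
        (fun p => le_self_add) (fun p h => key p.1 p.2 h)
    · exact aux_cont _ _ _ hu (htc.comp continuous_fst) (hdc.comp continuous_fst)
        (fun p => le_add_self) (fun p h => key p.1 p.2 h)
  · intro z
    have h1 : (F (z, 0)).1 = (f z).1 := by rw [hF0 z]
    have h2 := hF02 z
    refine Prod.ext h1 (Prod.ext ?_ ?_)
    · show (F (z, 0)).2 * s z / d z = (f z).2.1
      rw [h2, hd_def]; exact aux_cancel (s z) (t z)
    · show (F (z, 0)).2 * t z / d z = (f z).2.2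
      rw [h2, hd_def]
      have := aux_cancel (t z) (s z)
      rwa [add_comm] at this
  · intro q
    refine Prod.ext rfl ?_
    show (F q).2 * s q.1 / d q.1 + (F q).2 * t q.1 / d q.1 = (F q).2
    rcases eq_or_ne (d q.1) 0 with h | h
    · rw [h]
      simp [key q.1 q.2 h]
    · have hdq : s q.1 + t q.1 = d q.1 := rfl
      rw [← add_div, ← mul_add, hdq, mul_div_assoc, div_self h, mul_one]
  · intro z τ
    have h2 := hF02 z
    have hiff : (F (z, τ)).2 = 0 ↔ d z = 0 := by rw [hstrat z τ, h2]
    constructor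
    · show (F (z, τ)).2 * s z / d z = 0 ↔ (F (z, 0)).2 * s z / d z = 0
      rw [h2, aux_cancel (s z) (t z)]
      rw [div_eq_zero_iff, mul_eq_zero]
      constructor
      · rintro ((hu | hs) | hd0)
        · rcases add_eq_zero.1 (hiff.1 hu) with ⟨h, _⟩; exact h
        · exact hs
        · rcases add_eq_zero.1 hd0 with ⟨h, _⟩; exact h
      · intro h; exact Or.inl (Or.inr h)
    · show (F (z, τ)).2 * t z / d z = 0 ↔ (F (z, 0)).2 * t z / d z = 0
      rw [h2]
      have hc : (s z + t z) * t z / (s z + t z) = t z := by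
        have := aux_cancel (t z) (s z); rwa [add_comm] at this
      rw [hc, div_eq_zero_iff, mul_eq_zero]
      constructor
      · rintro ((hu | ht0) | hd0)
        · rcases add_eq_zero.1 (hiff.1 hu) with ⟨_, h⟩; exact h
        · exact ht0
        · rcases add_eq_zero.1 hd0 with ⟨_, h⟩; exact h
      · intro h; exact Or.inl (Or.inr h)
end
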